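/- Let λ > 1, s₀ = π/√(λ²−1), σ ∈ [0, s₀], α₃(s) = log(λ − cos(s√(λ²−1))), and f(s) = sin(πs/(2s₀) + (π/2)(1 − σ/s₀)) · e^{−α₃(s)/2}. Then ∫_{−s₀+σ}^{s₀+σ} f'(s)² e^{α₃(s)} ds = (π/4)(λ + cos(σ√(λ²−1))). -/

import Mathlib

/-!
With `k = √(λ² - 1)` and `t = s k`, the interval becomes a full period `[σk - π, σk + π]` and
`f'(s)² e^{α₃(s)} = (k/2)² Y(t)²`, where `Y(t) = sin((t - c)/2) + sin t cos((t - c)/2) / (λ - cos t)`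
and `c = σk`. Expanding the half angles, `Y²` is the derivative of a `2π`-periodic rational function
of `sin t`, `cos t` plus `(λ + cos c) / (2 (λ - cos t))`. For `r = λ - k` one has `r + 1/r = 2λ`,
so `k / (λ - cos t)` is the Poisson kernel `(1 - r²) / (1 - 2r cos t + r²)`, whose integral over a
period is `2π`.
-/

open Real

lemma hasDerivAt_mul_exp_neg_half {φ a : ℝ → ℝ} {φ' a' x : ℝ} (hφ : HasDerivAt φ φ' x)
    (ha : HasDerivAt a a' x) :
    HasDerivAt (fun x => φ x * exp (-a x / 2)) ((φ' - φ x * a' / 2) * exp (-a x / 2)) x := by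
  refine (hφ.mul (ha.neg.div_const 2).exp).congr_deriv ?_
  simp only [Pi.neg_apply]
  ring

lemma mul_exp_neg_half_sq_mul_exp (y a : ℝ) : (y * exp (-a / 2)) ^ 2 * exp a = y ^ 2 := by
  rw [mul_pow, ← exp_nat_mul, mul_assoc, ← exp_add]
  simp only [Nat.cast_ofNat, mul_div_cancel₀ _ (two_ne_zero' ℝ), neg_add_cancel, exp_zero, mul_one]

-- A primitive on all of `ℝ` of the Poisson kernel `(1 - r²) / (1 - 2r cos t + r²)`, `|r| < 1`;
-- unlike `2 arctan ((1 + r) / (1 - r) * tan (t / 2))` it has no jumps.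
noncomputable def poissonKernelPrimitive (r t : ℝ) : ℝ :=
  t + 2 * arctan (r * sin t / (1 - r * cos t))

lemma one_sub_mul_cos_pos {r : ℝ} (hr : |r| < 1) (t : ℝ) : 0 < 1 - r * cos t := by
  have : |r * cos t| < 1 := by
    rw [abs_mul]; nlinarith [abs_cos_le_one t, abs_nonneg r, abs_nonneg (cos t)]
  linarith [le_abs_self (r * cos t)]

lemma hasDerivAt_poissonKernelPrimitive {r : ℝ} (hr : |r| < 1) (t : ℝ) :
    HasDerivAt (poissonKernelPrimitive r) ((1 - r ^ 2) / (1 - 2 * r * cos t + r ^ 2)) t := by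
  have hQ := (one_sub_mul_cos_pos hr t).ne'
  have hquot := (((hasDerivAt_sin t).const_mul r).div
    (((hasDerivAt_cos t).const_mul r).const_sub 1) hQ).arctan
  refine HasDerivAt.congr_deriv (f := poissonKernelPrimitive r)
    ((hasDerivAt_id t).add (hquot.const_mul 2)) ?_
  simp only [Pi.div_apply]
  have hD : 1 - 2 * r * cos t + r ^ 2 = (1 - r * cos t) ^ 2 + (r * sin t) ^ 2 := by
    linear_combination r ^ 2 * (sin_sq_add_cos_sq t).symm
  have hpos : 0 < 1 - 2 * r * cos t + r ^ 2 := by rw [hD]; positivity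
  rw [div_pow, one_add_div (pow_ne_zero 2 hQ), ← hD]
  field_simp
  linear_combination (-2 * r ^ 2) * sin_sq_add_cos_sq t

lemma poissonKernelPrimitive_add_two_pi (r t : ℝ) :
    poissonKernelPrimitive r (t + 2 * π) = poissonKernelPrimitive r t + 2 * π := by
  simp only [poissonKernelPrimitive, sin_add_two_pi, cos_add_two_pi]
  ring

-- `-(2 / k) f' e^{α₃ / 2}` in the variable `t = s k`, with phase `c = σ k`.
noncomputable def profile (lam c t : ℝ) : ℝ :=
  sin ((t - c) / 2) + sin t / (lam - cos t) * cos ((t - c) / 2)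

lemma profile_sq {lam t : ℝ} (hD : lam - cos t ≠ 0) (c : ℝ) :
    profile lam c t ^ 2 = (1 - cos (t - c)) / 2 + sin (t - c) * sin t / (lam - cos t)
      + (1 + cos (t - c)) * sin t ^ 2 / (2 * (lam - cos t) ^ 2) := by
  have h2 : t - c = 2 * ((t - c) / 2) := by ring
  rw [profile, h2, cos_two_mul, sin_two_mul]
  field_simp
  linear_combination (2 * (lam - cos t) ^ 2) * sin_sq_add_cos_sq ((t - c) / 2)

section

variable {lam k : ℝ}

lemma sub_cos_pos (hlam : 1 < lam) (t : ℝ) : 0 < lam - cos t := by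
  linarith [cos_le_one t]

lemma poissonKernel_sub_eq_div_sub_cos (hk : k ^ 2 = lam ^ 2 - 1) (t : ℝ) :
    (1 - (lam - k) ^ 2) / (1 - 2 * (lam - k) * cos t + (lam - k) ^ 2) = k / (lam - cos t) := by
  have hne : 2 * (lam - k) ≠ 0 := by
    intro h
    have : k = lam := by linarith
    subst this
    linarith
  rw [← mul_div_mul_left k (lam - cos t) hne]
  congr 1 <;> linear_combination hk

lemma abs_sub_lt_one_of_sq_eq (hlam : 1 < lam) (hk0 : 0 < k) (hk : k ^ 2 = lam ^ 2 - 1) :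
    |lam - k| < 1 := by
  have hprod : (lam - k) * (lam + k) = 1 := by linear_combination (-1 : ℝ) * hk
  rw [abs_lt]
  constructor <;> nlinarith

noncomputable def profilePrimitive (lam k c t : ℝ) : ℝ :=
  ((k ^ 2 * sin c - (1 + lam * cos c) * sin t) / (lam - cos t)
    + (lam + cos c) / k * poissonKernelPrimitive (lam - k) t) / 2

lemma hasDerivAt_profilePrimitive (hlam : 1 < lam) (hk0 : 0 < k) (hk : k ^ 2 = lam ^ 2 - 1)
    (c t : ℝ) : HasDerivAt (profilePrimitive lam k c) (profile lam c t ^ 2) t := by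
  have hD := (sub_cos_pos hlam t).ne'
  have hquot := ((((hasDerivAt_sin t).const_mul (1 + lam * cos c)).const_sub
    (k ^ 2 * sin c)).div ((hasDerivAt_cos t).const_sub lam) hD)
  have hG := (hasDerivAt_poissonKernelPrimitive (abs_sub_lt_one_of_sq_eq hlam hk0 hk) t).const_mul
    ((lam + cos c) / k)
  refine HasDerivAt.congr_deriv (f := profilePrimitive lam k c) ((hquot.add hG).div_const 2) ?_
  rw [poissonKernel_sub_eq_div_sub_cos hk, profile_sq hD, cos_sub, sin_sub]
  field_simp
  linear_combination (cos t * cos c - lam * cos c - sin t * sin c) * sin_sq_add_cos_sq t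
    - sin t * sin c * hk

lemma profilePrimitive_add_two_pi (lam k c t : ℝ) :
    profilePrimitive lam k c (t + 2 * π) = profilePrimitive lam k c t + π * (lam + cos c) / k := by
  simp only [profilePrimitive, poissonKernelPrimitive_add_two_pi, sin_add_two_pi, cos_add_two_pi]
  ring

lemma continuous_profile (hlam : 1 < lam) (c : ℝ) : Continuous (profile lam c) := by
  unfold profile
  have : Continuous fun t => sin t / (lam - cos t) :=
    continuous_sin.div (by fun_prop) fun t => (sub_cos_pos hlam t).ne'
  fun_prop

lemma integral_profile_sq (hlam : 1 < lam) (hk0 : 0 < k) (hk : k ^ 2 = lam ^ 2 - 1) (c a : ℝ) :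
    ∫ t in a..a + 2 * π, profile lam c t ^ 2 = π * (lam + cos c) / k := by
  rw [intervalIntegral.integral_eq_sub_of_hasDerivAt
    (fun t _ => hasDerivAt_profilePrimitive hlam hk0 hk c t)
    (((continuous_profile hlam c).pow 2).intervalIntegrable _ _), profilePrimitive_add_two_pi]
  ring

end

lemma hasDerivAt_cos_mul_exp_neg_half_log {lam : ℝ} (hlam : 1 < lam) (k σ s : ℝ) :
    HasDerivAt (fun s => cos (k / 2 * (s - σ)) * exp (-log (lam - cos (s * k)) / 2))
      (-(k / 2) * profile lam (σ * k) (s * k) * exp (-log (lam - cos (s * k)) / 2)) s := by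
  have hφ := (((hasDerivAt_id' s).sub_const σ).const_mul (k / 2)).cos
  have ha := ((hasDerivAt_mul_const (x := s) k).cos.const_sub lam).log (sub_cos_pos hlam (s * k)).ne'
  refine (hasDerivAt_mul_exp_neg_half hφ ha).congr_deriv ?_
  rw [profile, show (s * k - σ * k) / 2 = k / 2 * (s - σ) by ring]
  ring

theorem stmt_6_general (lam : ℝ) (hlam : 1 < lam)
    (s₀ σ : ℝ) (hs₀ : s₀ = π / Real.sqrt (lam ^ 2 - 1))
    (a3 f : ℝ → ℝ)
    (ha3 : ∀ s, a3 s = Real.log (lam - Real.cos (s * Real.sqrt (lam ^ 2 - 1))))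
    (hf : ∀ s, f s = Real.sin (π * s / (2 * s₀) + (π / 2) * (1 - σ / s₀)) * Real.exp (-(a3 s) / 2)) :
    ∫ s in (-s₀ + σ)..(s₀ + σ), (deriv f s) ^ 2 * Real.exp (a3 s) =
      (π / 4) * (lam + Real.cos (σ * Real.sqrt (lam ^ 2 - 1))) := by
  set k := √(lam ^ 2 - 1)
  have hk0 : 0 < k := sqrt_pos.mpr (by nlinarith)
  have hk : k ^ 2 = lam ^ 2 - 1 := sq_sqrt (by nlinarith)
  have hs₀k : s₀ * k = π := by rw [hs₀]; field_simp
  have hf_eq : f = fun s => cos (k / 2 * (s - σ)) * exp (-log (lam - cos (s * k)) / 2) := by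
    ext s
    rw [hf, ha3, hs₀, ← sin_add_pi_div_two (k / 2 * (s - σ))]
    congr 2
    field_simp
    ring
  have hintegrand :
      ∀ s, deriv f s ^ 2 * exp (a3 s) = (k / 2) ^ 2 * profile lam (σ * k) (s * k) ^ 2 := by
    intro s
    rw [hf_eq, (hasDerivAt_cos_mul_exp_neg_half_log hlam k σ s).deriv, ha3,
      mul_exp_neg_half_sq_mul_exp]
    ring
  have hperiod : (s₀ + σ) * k = (-s₀ + σ) * k + 2 * π := by linear_combination 2 * hs₀k
  simp only [hintegrand]
  rw [intervalIntegral.integral_const_mul,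
    intervalIntegral.integral_comp_mul_right (fun t => profile lam (σ * k) t ^ 2) hk0.ne', hperiod, integral_profile_sq hlam hk0 hk, smul_eq_mul]
  field_simp
  ring

theorem stmt_6 (lam : ℝ) (hlam : 1 < lam)
    (s₀ σ : ℝ) (hs₀ : s₀ = π / Real.sqrt (lam ^ 2 - 1))
    (hσ : σ ∈ Set.Icc 0 s₀)
    (a3 f : ℝ → ℝ)
    (ha3 : ∀ s, a3 s = Real.log (lam - Real.cos (s * Real.sqrt (lam ^ 2 - 1))))
    (hf : ∀ s, f s = Real.sin (π * s / (2 * s₀) + (π / 2) * (1 - σ / s₀)) * Real.exp (-(a3 s) / 2)) :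
    ∫ s in (-s₀ + σ)..(s₀ + σ), (deriv f s) ^ 2 * Real.exp (a3 s) =
      (π / 4) * (lam + Real.cos (σ * Real.sqrt (lam ^ 2 - 1))) :=
  stmt_6_general lam hlam s₀ σ hs₀ a3 f ha3 hf
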